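/- Fix an index i with 1 ≤ i ≤ N. The gradient of the i-th pooling score S(A,H)_i with respect to the whole i-th row of the adjacency matrix is the vector g ∈ ℝ^{N} whose j-th component is g_j = d_i · d_j · ((Ď_{row j} ∘ A_{row j}) · (H W θ)) + a_{ii} · d_i³ · d_j · (H_{row j} · (W θ)); that is, for every j = 1, …, N, the derivative at t = 0 of t ↦ S(A + t·E_{ij}, H)_i equals g_j, where E_{ij} is the matrix with 1 in position (i,j) and 0 elsewhere. -/

import Mathlib

open Matrix BigOperators

/-- Hadamard-weighted adjacency `Ď ∘ A`, where `Ď k l = d k * d l`. -/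
noncomputable def DhadA {N : ℕ} (d : Fin N → ℝ) (A : Matrix (Fin N) (Fin N) ℝ) :
    Matrix (Fin N) (Fin N) ℝ :=
  Matrix.of fun k l => d k * d l * A k l

/-- Pooling score vector `S(A,H) = (Ď∘A)((Ď∘A) H W) θ` of the surrogate model. -/
noncomputable def poolScore {N D F : ℕ} (d : Fin N → ℝ)
    (A : Matrix (Fin N) (Fin N) ℝ) (H : Matrix (Fin N) (Fin D) ℝ)
    (W : Matrix (Fin D) (Fin F) ℝ) (θ : Fin F → ℝ) : Fin N → ℝ :=
  (DhadA d A).mulVec (((DhadA d A) * H * W).mulVec θ)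

/-!
The map `A ↦ Ď ∘ A` is linear and sends `E_{ij}` to `d_i d_j E_{ij}`. Hence, with `M = Ď ∘ A`,
`B = d_i d_j E_{ij}` and `u = H W θ`, the perturbed score is `t ↦ ((M + tB)(M + tB)u)_i`, a
quadratic polynomial in `t` whose linear coefficient `(BMu + MBu)_i` is the derivative at `0`.
Its two summands are the two terms of the gradient: `(BMu)_i = d_i d_j (Mu)_j` and
`(MBu)_i = M_{ii} d_i d_j u_j`.
-/

namespace Matrix

variable {n : Type*} [Fintype n]

section CommRing

variable {R : Type*} [CommRing R]

theorem add_smul_mulVec_add_smul_mulVec (M B : Matrix n n R) (u : n → R) (t : R) :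
    (M + t • B) *ᵥ ((M + t • B) *ᵥ u) =
      M *ᵥ (M *ᵥ u) + t • (B *ᵥ (M *ᵥ u) + M *ᵥ (B *ᵥ u)) + t ^ 2 • (B *ᵥ (B *ᵥ u)) := by
  simp only [add_mulVec, mulVec_add, smul_mulVec, mulVec_smul, smul_add, smul_smul, ← sq]
  abel

theorem mulVec_single_mulVec_apply [DecidableEq n] (M : Matrix n n R) (i j k : n) (c : R)
    (u : n → R) : (M *ᵥ (single i j c *ᵥ u)) k = M k i * (c * u j) := by
  rw [single_mulVec, ← Pi.single, mulVec_single]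
  simp [mul_comm]

end CommRing

theorem hasDerivAt_add_smul_mulVec_add_smul_mulVec_apply {𝕜 : Type*} [NontriviallyNormedField 𝕜]
    (M B : Matrix n n 𝕜) (u : n → 𝕜) (i : n) :
    HasDerivAt (fun t : 𝕜 => ((M + t • B) *ᵥ ((M + t • B) *ᵥ u)) i)
      ((B *ᵥ (M *ᵥ u) + M *ᵥ (B *ᵥ u)) i) 0 := by
  simp only [add_smul_mulVec_add_smul_mulVec, Pi.add_apply, Pi.smul_apply, smul_eq_mul]
  have hlin := ((hasDerivAt_id' (0 : 𝕜)).mul_const ((B *ᵥ (M *ᵥ u) + M *ᵥ (B *ᵥ u)) i)).const_add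
    ((M *ᵥ (M *ᵥ u)) i)
  have hquad := (hasDerivAt_pow 2 (0 : 𝕜)).mul_const ((B *ᵥ (B *ᵥ u)) i)
  simpa using hlin.fun_add hquad

end Matrix

section DhadA

variable {N : ℕ} (d : Fin N → ℝ)

theorem DhadA_add_smul (A B : Matrix (Fin N) (Fin N) ℝ) (t : ℝ) :
    DhadA d (A + t • B) = DhadA d A + t • DhadA d B := by
  ext k l
  simp only [DhadA, of_apply, Matrix.add_apply, Matrix.smul_apply, smul_eq_mul]
  ring

theorem DhadA_single (i j : Fin N) (c : ℝ) :
    DhadA d (single i j c) = single i j (d i * d j * c) := by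
  ext k l
  by_cases h : i = k ∧ j = l
  · obtain ⟨rfl, rfl⟩ := h
    simp [DhadA]
  · simp [DhadA, single_apply, h]

theorem poolScore_eq_mulVec_mulVec {D F : ℕ} (A : Matrix (Fin N) (Fin N) ℝ)
    (H : Matrix (Fin N) (Fin D) ℝ) (W : Matrix (Fin D) (Fin F) ℝ) (θ : Fin F → ℝ) :
    poolScore d A H W θ = DhadA d A *ᵥ (DhadA d A *ᵥ ((H * W) *ᵥ θ)) := by
  rw [poolScore, Matrix.mul_assoc, ← mulVec_mulVec]

end DhadA

theorem grad_poolScore_adj_row_general {N D F : ℕ}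
    (d : Fin N → ℝ) (A : Matrix (Fin N) (Fin N) ℝ)
    (H : Matrix (Fin N) (Fin D) ℝ) (W : Matrix (Fin D) (Fin F) ℝ)
    (θ : Fin F → ℝ) (i : Fin N) :
    ∀ j : Fin N,
      deriv (fun t : ℝ =>
          poolScore d (A + t • Matrix.single i j (1 : ℝ)) H W θ i) 0 =
        d i * d j * (∑ k, (d j * d k * A j k) * ((H * W).mulVec θ) k)
          + A i i * (d i) ^ 3 * d j * ((H * W).mulVec θ) j := by
  intro j
  simp only [poolScore_eq_mulVec_mulVec, DhadA_add_smul, DhadA_single]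
  generalize (H * W) *ᵥ θ = u
  rw [(hasDerivAt_add_smul_mulVec_add_smul_mulVec_apply _ _ _ i).deriv, Pi.add_apply,
    single_mulVec, Function.update_self, mulVec_single_mulVec_apply]
  simp only [mulVec, dotProduct, DhadA, of_apply]
  ring

/-- Theorem 1 of the paper (row-gradient form): the gradient of the i-th pooling score
with respect to the i-th row of the adjacency matrix is the vector `g` with
`g j = d_i d_j ((Ď_{row j} ∘ A_{row j}) · (H W θ)) + a_{ii} d_i³ d_j (H_{row j} · (W θ))`. -/
theorem grad_poolScore_adj_row {N D F : ℕ} (hN : 0 < N) (hD : 0 < D) (hF : 0 < F)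
    (d : Fin N → ℝ) (A : Matrix (Fin N) (Fin N) ℝ)
    (H : Matrix (Fin N) (Fin D) ℝ) (W : Matrix (Fin D) (Fin F) ℝ)
    (θ : Fin F → ℝ) (i : Fin N) :
    ∀ j : Fin N,
      deriv (fun t : ℝ =>
          poolScore d (A + t • Matrix.single i j (1 : ℝ)) H W θ i) 0 =
        d i * d j * (∑ k, (d j * d k * A j k) * ((H * W).mulVec θ) k)
          + A i i * (d i) ^ 3 * d j * ((H * W).mulVec θ) j :=
  grad_poolScore_adj_row_general d A H W θ i
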